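/- Let θ, p ∈ ℂ and let r be a real number with 0 < r < 1, |θ|·r² < 1, and 1−θr² not a nonpositive real number. For n ∈ ℕ define v_n = ∑_{k=0}^{n} (((1/2)_k)²/(k!)²) · θ^{n−k} · (−p)_{n−k}/(n−k)!. Then: (i) the series (π/2)·∑_{n≥0} v_n r^{2n} converges with sum equal to (1−θr²)^p · ∫_0^{π/2} (1−r²sin²t)^{−1/2} dt; (ii) v_0 = 1, v_1 = 1/4 − pθ, v_2 = (1/2)θ²p(p−1) − (1/4)θp + 9/64, and for every integer n ≥ 2, v_{n+1} = μ(n)v_n/(n+1)² − θ·ζ(n)v_{n−1}/(n+1)² + θ²·σ(n)v_{n−2}/(n+1)², where μ(n) = (n+1/2)² + θ(2n²−2np−p), ζ(n) = 2n² − 2(p+1)n + 1/2 + θ(n−p−1)², and σ(n) = (n−p−3/2)². -/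

import Mathlib

open Finset Filter

noncomputable def poch (w : ℂ) (k : ℕ) : ℂ := (ascPochhammer ℂ k).eval w

lemma poch_zero (w : ℂ) : poch w 0 = 1 := by simp [poch]

lemma poch_succ (w : ℂ) (k : ℕ) : poch w (k + 1) = poch w k * (w + k) := by
  simp [poch, ascPochhammer_succ_right]

noncomputable def bc (a : ℂ) (k : ℕ) : ℂ := poch a k / (Nat.factorial k : ℂ)

lemma bc_zero (a : ℂ) : bc a 0 = 1 := by simp [bc, poch_zero]

lemma bc_succ (a : ℂ) (k : ℕ) : ((k : ℂ) + 1) * bc a (k + 1) = (a + k) * bc a k := by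
  have hk : (Nat.factorial k : ℂ) ≠ 0 := Nat.cast_ne_zero.mpr (Nat.factorial_ne_zero k)
  have hk1 : ((k : ℂ) + 1) ≠ 0 := by exact_mod_cast Nat.cast_add_one_ne_zero (R := ℂ) k
  rw [bc, bc, poch_succ, Nat.factorial_succ]
  push_cast
  field_simp

lemma bc_norm_succ (a : ℂ) (k : ℕ) :
    ((k : ℝ) + 1) * ‖bc a (k + 1)‖ = ‖a + k‖ * ‖bc a k‖ := by
  have h := congrArg norm (bc_succ a k)
  rw [norm_mul, norm_mul] at h
  have h2 : ‖(k : ℂ) + 1‖ = (k : ℝ) + 1 := by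
    have : ((k : ℂ) + 1) = ((k + 1 : ℕ) : ℂ) := by push_cast; ring
    rw [this, Complex.norm_natCast]; push_cast; ring
  rwa [h2] at h

lemma summable_aux (a : ℂ) {ρ : ℝ} (h0 : 0 ≤ ρ) (h1 : ρ < 1) :
    Summable (fun k : ℕ => ((k : ℝ) + 1) * ‖bc a k‖ * ρ ^ k) := by
  set r : ℝ := (1 + ρ) / 2 with hr
  have hρr : ρ < r := by rw [hr]; linarith
  have hr1 : r < 1 := by rw [hr]; linarith
  refine summable_of_ratio_norm_eventually_le hr1 ?_
  -- the tendsto fact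
  have T0 : Tendsto (fun k : ℕ => 1 / ((k : ℝ) + 1)) atTop (nhds 0) :=
    tendsto_one_div_add_atTop_nhds_zero_nat
  have key : Tendsto (fun k : ℕ => (1 + 1 / ((k : ℝ) + 1)) * (1 + (‖a‖ - 1) * (1 / ((k : ℝ) + 1))) * ρ)
      atTop (nhds ρ) := by
    have t1 : Tendsto (fun k : ℕ => 1 + 1 / ((k : ℝ) + 1)) atTop (nhds (1 + 0)) :=
      (tendsto_const_nhds : Tendsto (fun _ : ℕ => (1:ℝ)) atTop (nhds 1)).add T0
    have t2 : Tendsto (fun k : ℕ => 1 + (‖a‖ - 1) * (1 / ((k : ℝ) + 1))) atTop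
        (nhds (1 + (‖a‖ - 1) * 0)) :=
      (tendsto_const_nhds : Tendsto (fun _ : ℕ => (1:ℝ)) atTop (nhds 1)).add (T0.const_mul (‖a‖ - 1))
    have := (t1.mul t2).mul_const ρ
    simpa using this
  have hev : ∀ᶠ k : ℕ in atTop,
      (1 + 1 / ((k : ℝ) + 1)) * (1 + (‖a‖ - 1) * (1 / ((k : ℝ) + 1))) * ρ ≤ r :=
    key.eventually_le_const hρr
  filter_upwards [hev] with k hk
  have hk1 : (0 : ℝ) < (k : ℝ) + 1 := by positivity
  have hq : ((k : ℝ) + 2) * (‖a‖ + k) * ρ ≤ r * ((k : ℝ) + 1) ^ 2 := by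
    have e : (1 + 1 / ((k : ℝ) + 1)) * (1 + (‖a‖ - 1) * (1 / ((k : ℝ) + 1))) * ρ
        = ((k : ℝ) + 2) * (‖a‖ + k) * ρ / ((k : ℝ) + 1) ^ 2 := by
      field_simp
      ring
    rw [e, div_le_iff₀ (by positivity)] at hk
    exact hk
  have hq2 : ((k : ℝ) + 2) * ‖a + k‖ * ρ ≤ r * ((k : ℝ) + 1) ^ 2 := by
    refine le_trans ?_ hq
    have hna : ‖a + (k : ℂ)‖ ≤ ‖a‖ + k := by
      refine le_trans (norm_add_le _ _) ?_
      simp [Complex.norm_natCast]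
    have : (0 : ℝ) ≤ ((k : ℝ) + 2) * ρ := by positivity
    nlinarith
  -- now the main inequality
  have hb := bc_norm_succ a k
  have hnn : (0 : ℝ) ≤ ρ ^ k * ‖bc a k‖ := by positivity
  have h5 : ((k : ℝ) + 2) * ‖a + k‖ * ρ * (ρ ^ k * ‖bc a k‖)
      ≤ r * ((k : ℝ) + 1) ^ 2 * (ρ ^ k * ‖bc a k‖) :=
    mul_le_mul_of_nonneg_right hq2 hnn
  have h6 : ((k : ℝ) + 1) * ((((k : ℝ) + 1) + 1) * ‖bc a (k + 1)‖ * ρ ^ (k + 1))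
      = ((k : ℝ) + 2) * ‖a + k‖ * ρ * (ρ ^ k * ‖bc a k‖) := by
    linear_combination (((k : ℝ) + 2) * ρ ^ (k + 1)) * hb
  have h7 : r * ((k : ℝ) + 1) ^ 2 * (ρ ^ k * ‖bc a k‖)
      = ((k : ℝ) + 1) * (r * (((k : ℝ) + 1) * ‖bc a k‖ * ρ ^ k)) := by ring
  have h8 : (((k : ℝ) + 1) + 1) * ‖bc a (k + 1)‖ * ρ ^ (k + 1)
      ≤ r * (((k : ℝ) + 1) * ‖bc a k‖ * ρ ^ k) := by
    have := h5
    rw [← h6, h7] at this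
    exact le_of_mul_le_mul_left this hk1
  have hpos1 : (0 : ℝ) ≤ (((k : ℝ) + 1) + 1) * ‖bc a (k + 1)‖ * ρ ^ (k + 1) := by positivity
  have hpos2 : (0 : ℝ) ≤ ((k : ℝ) + 1) * ‖bc a k‖ * ρ ^ k := by positivity
  calc ‖(((k + 1 : ℕ) : ℝ) + 1) * ‖bc a (k + 1)‖ * ρ ^ (k + 1)‖
      = (((k : ℝ) + 1) + 1) * ‖bc a (k + 1)‖ * ρ ^ (k + 1) := by
        rw [Real.norm_of_nonneg (by push_cast; positivity)]; push_cast; ring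
    _ ≤ r * (((k : ℝ) + 1) * ‖bc a k‖ * ρ ^ k) := h8
    _ = r * ‖((k : ℝ) + 1) * ‖bc a k‖ * ρ ^ k‖ := by rw [Real.norm_of_nonneg hpos2]

lemma summable_bc (a : ℂ) {z : ℂ} (hz : ‖z‖ < 1) : Summable (fun k : ℕ => bc a k * z ^ k) := by
  have h0 : (0 : ℝ) ≤ ‖z‖ := norm_nonneg z
  refine Summable.of_norm_bounded (summable_aux a h0 hz) fun k => ?_
  rw [norm_mul, norm_pow]
  nlinarith [mul_nonneg (Nat.cast_nonneg (α := ℝ) k) (mul_nonneg (norm_nonneg (bc a k)) (pow_nonneg h0 k))]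

noncomputable def FF (a : ℂ) (z : ℂ) : ℂ := ∑' k : ℕ, bc a k * z ^ k

lemma FF_hasDerivAt (a : ℂ) {z : ℂ} (hz : ‖z‖ < 1) :
    ∃ S : ℂ, HasSum (fun k : ℕ => (k : ℂ) * bc a k * z ^ (k - 1)) S ∧
      HasDerivAt (FF a) S z := by
  set ρ : ℝ := (1 + ‖z‖) / 2 with hρ
  have hn0 : (0 : ℝ) ≤ ‖z‖ := norm_nonneg z
  have hρhalf : 1/2 ≤ ρ := by rw [hρ]; linarith
  have hρ0 : 0 ≤ ρ := by linarith
  have hρ1 : ρ < 1 := by rw [hρ]; linarith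
  have hzρ : ‖z‖ < ρ := by rw [hρ]; linarith
  set u : ℕ → ℝ := fun k => 2 * (((k : ℝ) + 1) * ‖bc a k‖ * ρ ^ k) with hu
  have hu_sum : Summable u := (summable_aux a hρ0 hρ1).mul_left 2
  have hg : ∀ (k : ℕ) (y : ℂ), HasDerivAt (fun w => bc a k * w ^ k) (bc a k * ((k : ℂ) * y ^ (k - 1))) y :=
    fun k y => (hasDerivAt_pow k y).const_mul (bc a k)
  have hbound : ∀ (k : ℕ) (y : ℂ), y ∈ Metric.ball (0 : ℂ) ρ →
      ‖bc a k * ((k : ℂ) * y ^ (k - 1))‖ ≤ u k := by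
    intro k y hy
    rw [Metric.mem_ball, dist_zero_right] at hy
    match k with
    | 0 => simp [hu]; all_goals positivity
    | (j + 1) =>
      rw [norm_mul, norm_mul, norm_pow]
      have h1 : ‖((j + 1 : ℕ) : ℂ)‖ = (j : ℝ) + 1 := by
        rw [Complex.norm_natCast]; push_cast; ring
      rw [h1]
      have h3 : (0:ℝ) < ρ := by linarith
      have h2 : ‖y‖ ^ (j + 1 - 1) ≤ ρ ^ j := by
        simpa using pow_le_pow_left₀ (norm_nonneg y) (le_of_lt hy) j
      have h5 : ρ ^ j ≤ 2 * ρ ^ (j + 1) := by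
        have h51 : ρ ^ j * 1 ≤ ρ ^ j * (2 * ρ) :=
          mul_le_mul_of_nonneg_left (by linarith) (pow_nonneg hρ0 j)
        calc ρ ^ j = ρ ^ j * 1 := by ring
          _ ≤ ρ ^ j * (2 * ρ) := h51
          _ = 2 * ρ ^ (j + 1) := by rw [pow_succ]; ring
      have h2' : ‖y‖ ^ (j + 1 - 1) ≤ 2 * ρ ^ (j + 1) := le_trans h2 h5
      have h6 : ‖bc a (j+1)‖ * (((j:ℝ) + 1) * ‖y‖ ^ (j + 1 - 1))
          ≤ ‖bc a (j+1)‖ * (((j:ℝ) + 1) * (2 * ρ ^ (j + 1))) :=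
        mul_le_mul_of_nonneg_left
          (mul_le_mul_of_nonneg_left h2' (by positivity)) (norm_nonneg _)
      refine le_trans h6 ?_
      simp only [hu]
      push_cast
      nlinarith [mul_nonneg (norm_nonneg (bc a (j+1))) (pow_nonneg hρ0 (j+1))]
  have hsum0 : Summable fun k : ℕ => bc a k * (0 : ℂ) ^ k := summable_bc a (by norm_num)
  have hmemz : z ∈ Metric.ball (0 : ℂ) ρ := by rw [Metric.mem_ball, dist_zero_right]; exact hzρ
  have hmem0 : (0 : ℂ) ∈ Metric.ball (0 : ℂ) ρ := by
    rw [Metric.mem_ball, dist_self]; linarith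
  have hD := hasDerivAt_tsum_of_isPreconnected hu_sum Metric.isOpen_ball
    (convex_ball _ _).isPreconnected (fun k y _ => hg k y) hbound hmem0 hsum0 hmemz
  have hSsum : Summable fun k : ℕ => bc a k * ((k : ℂ) * z ^ (k - 1)) :=
    Summable.of_norm_bounded hu_sum fun k => hbound k z hmemz
  refine ⟨∑' k : ℕ, bc a k * ((k : ℂ) * z ^ (k - 1)), ?_, ?_⟩
  · have := hSsum.hasSum
    have hfun : (fun k : ℕ => (k : ℂ) * bc a k * z ^ (k - 1))
        = fun k : ℕ => bc a k * ((k : ℂ) * z ^ (k - 1)) := funext fun k => by ring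
    rw [hfun]
    exact this
  · exact hD

lemma FF_ode (a : ℂ) {z S : ℂ} (hz : ‖z‖ < 1)
    (hS : HasSum (fun k : ℕ => (k : ℂ) * bc a k * z ^ (k - 1)) S) :
    (1 - z) * S = a * FF a z := by
  have hF : HasSum (fun k : ℕ => bc a k * z ^ k) (FF a z) := (summable_bc a hz).hasSum
  have hS1 : HasSum (fun k : ℕ => ((k + 1 : ℕ) : ℂ) * bc a (k + 1) * z ^ k)
      (S - ∑ i ∈ range 1, (i : ℂ) * bc a i * z ^ (i - 1)) :=
    (hasSum_nat_add_iff' 1).mpr hS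
  simp only [Finset.sum_range_one, Nat.cast_zero, zero_mul, sub_zero] at hS1
  have hS2 : HasSum (fun k : ℕ => (a + k) * bc a k * z ^ k) S := by
    have hfun : (fun k : ℕ => ((k + 1 : ℕ) : ℂ) * bc a (k + 1) * z ^ k)
        = fun k : ℕ => (a + k) * bc a k * z ^ k := by
      funext k
      push_cast
      linear_combination (z ^ k) * (bc_succ a k)
    rwa [hfun] at hS1
  have hzS : HasSum (fun k : ℕ => (k : ℂ) * bc a k * z ^ k) (z * S) := by
    have hfun : (fun k : ℕ => (k : ℂ) * bc a k * z ^ k)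
        = fun k : ℕ => z * ((k : ℂ) * bc a k * z ^ (k - 1)) := by
      funext k
      match k with
      | 0 => simp
      | (j + 1) => simp only [Nat.add_sub_cancel]; push_cast; ring
    rw [hfun]; exact hS.mul_left z
  have hsum2 : HasSum (fun k : ℕ => (a + k) * bc a k * z ^ k) (a * FF a z + z * S) := by
    have h := (hF.mul_left a).add hzS
    have hfun : (fun k : ℕ => a * (bc a k * z ^ k) + (k : ℂ) * bc a k * z ^ k)
        = fun k : ℕ => (a + k) * bc a k * z ^ k := funext fun k => by ring
    rwa [hfun] at h
  have huniq := hS2.unique hsum2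
  linear_combination huniq

lemma one_sub_slit {w : ℂ} (hw : ‖w‖ < 1) : (1 - w) ∈ Complex.slitPlane := by
  refine Complex.mem_slitPlane_iff.mpr (Or.inl ?_)
  have : w.re ≤ ‖w‖ := by
    calc w.re ≤ |w.re| := le_abs_self _
      _ ≤ ‖w‖ := Complex.abs_re_le_norm w
      _ = ‖w‖ := rfl
  simp only [Complex.sub_re, Complex.one_re]
  linarith

lemma one_sub_ne {w : ℂ} (hw : ‖w‖ < 1) : (1 - w) ≠ 0 :=
  Complex.slitPlane_ne_zero (one_sub_slit hw)

lemma FF_eq (a : ℂ) {z : ℂ} (hz : ‖z‖ < 1) : FF a z * (1 - z) ^ a = 1 := by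
  set g : ℂ → ℂ := fun y => FF a y * (1 - y) ^ a with hgdef
  have hg0 : ∀ w ∈ Metric.ball (0 : ℂ) 1, HasDerivAt g 0 w := by
    intro w hwmem
    have hw : ‖w‖ < 1 := by rwa [Metric.mem_ball, dist_zero_right] at hwmem
    obtain ⟨S, hS, hD⟩ := FF_hasDerivAt a hw
    have hslit := one_sub_slit hw
    have hne := one_sub_ne hw
    have hpow : HasDerivAt (fun y : ℂ => (1 - y) ^ a) (a * (1 - w) ^ (a - 1) * (-1)) w :=
      HasDerivAt.cpow_const ((hasDerivAt_id w).const_sub 1) hslit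
    have hmul := hD.mul hpow
    have hode := FF_ode a hw hS
    have hpoweq : (1 - w) ^ a = (1 - w) ^ (a - 1) * (1 - w) := by
      have h := Complex.cpow_add (a - 1) 1 hne
      rw [Complex.cpow_one] at h
      rw [← h, sub_add_cancel]
    have : S * (1 - w) ^ a + FF a w * (a * (1 - w) ^ (a - 1) * (-1)) = 0 := by
      rw [hpoweq]
      linear_combination ((1 - w) ^ (a - 1)) * hode
    rw [this] at hmul
    exact hmul
  have hdiffOn : DifferentiableOn ℂ g (Metric.ball (0 : ℂ) 1) :=
    fun w hw => ((hg0 w hw).differentiableAt).differentiableWithinAt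
  have hfzero : ∀ w ∈ Metric.ball (0 : ℂ) 1, fderivWithin ℂ g (Metric.ball (0 : ℂ) 1) w = 0 := by
    intro w hw
    rw [fderivWithin_of_isOpen Metric.isOpen_ball hw]
    have := (hg0 w hw).hasFDerivAt.fderiv
    rw [this]
    ext x
    simp
  have hzmem : z ∈ Metric.ball (0 : ℂ) 1 := by rwa [Metric.mem_ball, dist_zero_right]
  have h0mem : (0 : ℂ) ∈ Metric.ball (0 : ℂ) 1 := by
    rw [Metric.mem_ball, dist_self]; norm_num
  have hconst := (convex_ball (0 : ℂ) 1).is_const_of_fderivWithin_eq_zero hdiffOn hfzero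
    hzmem h0mem
  have hg0val : g 0 = 1 := by
    have hFF0 : FF a 0 = 1 := by
      rw [FF]
      rw [tsum_eq_single 0 (fun k hk => by simp [zero_pow hk, bc])]
      simp [bc_zero]
    simp [hgdef, hFF0, Complex.one_cpow]
  calc FF a z * (1 - z) ^ a = g z := rfl
    _ = g 0 := hconst
    _ = 1 := hg0val

lemma hasSum_binomial (a : ℂ) {z : ℂ} (hz : ‖z‖ < 1) :
    HasSum (fun k : ℕ => bc a k * z ^ k) ((1 - z) ^ (-a)) := by
  have hF : HasSum (fun k : ℕ => bc a k * z ^ k) (FF a z) := (summable_bc a hz).hasSum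
  have heq := FF_eq a hz
  have hXne : (1 - z) ^ a ≠ 0 := by
    intro h
    rw [h, mul_zero] at heq
    norm_num at heq
  have : FF a z = (1 - z) ^ (-a) := by
    rw [Complex.cpow_neg]
    field_simp at heq ⊢
    linear_combination heq
  rwa [this] at hF

noncomputable def pr (k : ℕ) : ℝ := (ascPochhammer ℝ k).eval (1/2)

lemma pr_zero : pr 0 = 1 := by simp [pr]

lemma pr_succ (k : ℕ) : pr (k + 1) = pr k * (1/2 + k) := by
  simp [pr, ascPochhammer_succ_right]

lemma pr_pos (k : ℕ) : 0 < pr k := by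
  induction k with
  | zero => rw [pr_zero]; norm_num
  | succ j ih => rw [pr_succ]; positivity

lemma pr_cast (k : ℕ) : ((pr k : ℝ) : ℂ) = poch (1/2) k := by
  induction k with
  | zero => simp [pr_zero, poch_zero]
  | succ j ih => rw [pr_succ, poch_succ, ← ih]; push_cast; ring

lemma pr_div_le_one (k : ℕ) : pr k / (Nat.factorial k : ℝ) ≤ 1 := by
  induction k with
  | zero => simp [pr_zero]
  | succ j ih =>
    rw [pr_succ, Nat.factorial_succ]
    have hf : (0 : ℝ) < (Nat.factorial j : ℝ) := by
      exact_mod_cast Nat.factorial_pos j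
    have hj1 : (0 : ℝ) < (j : ℝ) + 1 := by positivity
    push_cast
    rw [div_le_one (by positivity)] at ih ⊢
    have : (1/2 + (j:ℝ)) < (j:ℝ) + 1 := by linarith
    nlinarith [pr_pos j]

lemma hasSum_sqrt_real {u : ℝ} (h0 : 0 ≤ u) (h1 : u < 1) :
    HasSum (fun k : ℕ => pr k / (Nat.factorial k : ℝ) * u ^ k) (1 / Real.sqrt (1 - u)) := by
  have hz : ‖(u : ℂ)‖ < 1 := by
    rw [Complex.norm_real, Real.norm_of_nonneg h0]; exact h1
  have hC := hasSum_binomial (1/2 : ℂ) hz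
  have hterm : ∀ k : ℕ, bc (1/2 : ℂ) k * (u : ℂ) ^ k
      = ((pr k / (Nat.factorial k : ℝ) * u ^ k : ℝ) : ℂ) := by
    intro k
    rw [bc, ← pr_cast]
    push_cast
    ring
  have hval : ((1 : ℂ) - (u : ℂ)) ^ (-(1/2 : ℂ)) = ((1 / Real.sqrt (1 - u) : ℝ) : ℂ) := by
    have h1u : (0 : ℝ) ≤ 1 - u := by linarith
    have hb : ((1 : ℂ) - (u : ℂ)) = (((1 - u : ℝ)) : ℂ) := by push_cast; ring
    have hy : (-(1/2 : ℂ)) = ((-(1/2) : ℝ) : ℂ) := by push_cast; ring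
    rw [hb, hy, ← Complex.ofReal_cpow h1u]
    congr 1
    rw [Real.rpow_neg h1u, Real.sqrt_eq_rpow]
    rw [inv_eq_one_div]
  rw [← Complex.hasSum_ofReal]
  have := hC
  simp only [hterm] at this
  rwa [hval] at this

lemma wallis (n : ℕ) :
    (∫ t in (0:ℝ)..(Real.pi/2), Real.sin t ^ (2*n))
      = Real.pi/2 * (pr n / (Nat.factorial n : ℝ)) := by
  induction n with
  | zero => simp [pr_zero]
  | succ m ih =>
    have h : 2 * (m + 1) = 2 * m + 2 := by ring
    rw [h, integral_sin_pow]
    rw [ih, pr_succ, Nat.factorial_succ, Real.sin_zero, Real.cos_pi_div_two]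
    have hf : (0:ℝ) < (Nat.factorial m : ℝ) := by exact_mod_cast Nat.factorial_pos m
    have hz : (0:ℝ) ^ (2*m+1) = 0 := zero_pow (by omega)
    rw [hz]
    push_cast
    field_simp
    ring

lemma hasSum_K (r : ℝ) (hr0 : 0 < r) (hr1 : r < 1) :
    HasSum (fun n : ℕ => Real.pi/2 * (pr n / (Nat.factorial n : ℝ))^2 * r^(2*n))
      (∫ t in (0:ℝ)..(Real.pi/2), 1 / Real.sqrt (1 - r^2 * Real.sin t^2)) := by
  have hple : (0:ℝ) ≤ Real.pi/2 := by positivity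
  set μ := MeasureTheory.volume.restrict (Set.Ioc (0:ℝ) (Real.pi/2)) with hμ
  set F : ℕ → ℝ → ℝ := fun n t => pr n / (Nat.factorial n : ℝ) * r^(2*n) * Real.sin t ^ (2*n)
    with hF
  have hnn : ∀ n t, 0 ≤ F n t := by
    intro n t
    have h1 : 0 ≤ Real.sin t ^ (2*n) := Even.pow_nonneg (even_two_mul n) _
    have h2 : 0 < pr n := pr_pos n
    have h3 : (0:ℝ) < (Nat.factorial n : ℝ) := by exact_mod_cast Nat.factorial_pos n
    positivity
  have hcont : ∀ n, Continuous (F n) :=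
    fun n => continuous_const.mul (Real.continuous_sin.pow (2*n))
  have hF_int : ∀ n, MeasureTheory.Integrable (F n) μ :=
    fun n => (hcont n).integrableOn_Ioc
  have h_int_eq : ∀ n, (∫ t, F n t ∂μ) = Real.pi/2 * (pr n / (Nat.factorial n : ℝ))^2 * r^(2*n) := by
    intro n
    rw [hμ, ← intervalIntegral.integral_of_le hple]
    rw [hF]
    simp only
    rw [intervalIntegral.integral_const_mul, wallis]
    ring
  have h_norm_eq : ∀ n, (∫ t, ‖F n t‖ ∂μ) = Real.pi/2 * (pr n / (Nat.factorial n : ℝ))^2 * r^(2*n) := by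
    intro n
    have : (fun t => ‖F n t‖) = F n := funext fun t => Real.norm_of_nonneg (hnn n t)
    rw [this, h_int_eq]
  have hF_sum : Summable (fun n => ∫ t, ‖F n t‖ ∂μ) := by
    simp only [h_norm_eq]
    have hgeo : Summable (fun n : ℕ => Real.pi/2 * (r^2)^n) := by
      refine Summable.mul_left _ (summable_geometric_of_lt_one (by positivity) ?_)
      nlinarith
    refine Summable.of_nonneg_of_le (fun n => ?_) (fun n => ?_) hgeo
    · have h2 : 0 < pr n := pr_pos n
      have h3 : (0:ℝ) < (Nat.factorial n : ℝ) := by exact_mod_cast Nat.factorial_pos n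
      positivity
    · have h1 := pr_div_le_one n
      have h2 : 0 < pr n := pr_pos n
      have h3 : (0:ℝ) < (Nat.factorial n : ℝ) := by exact_mod_cast Nat.factorial_pos n
      have h4 : (0:ℝ) ≤ r^(2*n) := by positivity
      have h5 : (pr n / (Nat.factorial n : ℝ))^2 ≤ 1 := by
        have h6 : 0 < pr n / (Nat.factorial n : ℝ) := by positivity
        nlinarith
      have h7 : (r^2)^n = r^(2*n) := by rw [← pow_mul]
      rw [h7]
      have h8 : (pr n / (Nat.factorial n : ℝ))^2 * r^(2*n) ≤ r^(2*n) := by nlinarith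
      calc Real.pi/2 * (pr n / (Nat.factorial n : ℝ))^2 * r^(2*n)
          = Real.pi/2 * ((pr n / (Nat.factorial n : ℝ))^2 * r^(2*n)) := by ring
        _ ≤ Real.pi/2 * r^(2*n) := mul_le_mul_of_nonneg_left h8 hple
  have hmain := MeasureTheory.hasSum_integral_of_summable_integral_norm hF_int hF_sum
  have htsum : ∀ t : ℝ, (∑' n, F n t) = 1 / Real.sqrt (1 - r^2 * Real.sin t^2) := by
    intro t
    have hu0 : 0 ≤ r^2 * Real.sin t^2 := by positivity
    have hu1 : r^2 * Real.sin t^2 < 1 := by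
      nlinarith [Real.sin_sq_le_one t, sq_nonneg (Real.sin t), sq_nonneg r]
    have hs := hasSum_sqrt_real hu0 hu1
    have hFt : ∀ n, F n t = pr n / (Nat.factorial n : ℝ) * (r^2 * Real.sin t^2)^n := by
      intro n
      rw [hF]
      simp only
      rw [mul_pow, ← pow_mul, ← pow_mul]
      ring
    rw [funext hFt]
    exact hs.tsum_eq
  simp only [h_int_eq, htsum] at hmain
  rw [intervalIntegral.integral_of_le hple]
  exact hmain

noncomputable def cc (k : ℕ) : ℂ := poch (1/2) k ^ 2 / (Nat.factorial k : ℂ) ^ 2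
noncomputable def dd (θ p : ℂ) (m : ℕ) : ℂ := θ ^ m * poch (-p) m / (Nat.factorial m : ℂ)

lemma cc_succ (k : ℕ) : ((k : ℂ) + 1) ^ 2 * cc (k + 1) = ((k : ℂ) + 1/2) ^ 2 * cc k := by
  have hk : (Nat.factorial k : ℂ) ≠ 0 := Nat.cast_ne_zero.mpr (Nat.factorial_ne_zero k)
  have hk1 : ((k : ℂ) + 1) ≠ 0 := by
    exact_mod_cast Nat.cast_add_one_ne_zero (R := ℂ) k
  rw [cc, cc, poch_succ, Nat.factorial_succ]
  push_cast
  field_simp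
  ring

lemma dd_succ (θ p : ℂ) (m : ℕ) :
    ((m : ℂ) + 1) * dd θ p (m + 1) = θ * ((m : ℂ) - p) * dd θ p m := by
  have hm : (Nat.factorial m : ℂ) ≠ 0 := Nat.cast_ne_zero.mpr (Nat.factorial_ne_zero m)
  have hm1 : ((m : ℂ) + 1) ≠ 0 := by
    exact_mod_cast Nat.cast_add_one_ne_zero (R := ℂ) m
  rw [dd, dd, poch_succ, Nat.factorial_succ]
  push_cast
  field_simp
  ring

noncomputable def VV (θ p : ℂ) (n : ℕ) : ℂ := ∑ k ∈ range (n + 1), cc k * dd θ p (n - k)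
noncomputable def WW (θ p : ℂ) (n : ℕ) : ℂ := ∑ k ∈ range (n + 1), (k : ℂ) * (cc k * dd θ p (n - k))
noncomputable def ZZ (θ p : ℂ) (n : ℕ) : ℂ := ∑ k ∈ range (n + 1), (k : ℂ) ^ 2 * (cc k * dd θ p (n - k))

lemma keyd (θ p : ℂ) (φ : ℕ → ℂ) (n : ℕ) :
    ∑ k ∈ range (n + 2), φ k * (((n : ℂ) + 1 - k) * (cc k * dd θ p (n + 1 - k)))
      = ∑ k ∈ range (n + 1), φ k * (θ * (((n : ℂ) - k) - p) * (cc k * dd θ p (n - k))) := by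
  rw [Finset.sum_range_succ]
  have hlast : ((n : ℂ) + 1 - ((n + 1 : ℕ) : ℂ)) = 0 := by push_cast; ring
  rw [hlast]
  simp only [zero_mul, mul_zero, add_zero]
  refine Finset.sum_congr rfl fun k hk => ?_
  have hk' : k ≤ n := Nat.lt_succ_iff.mp (Finset.mem_range.mp hk)
  have h1 : n + 1 - k = (n - k) + 1 := by omega
  have h2 : ((n : ℂ) + 1 - (k : ℂ)) = ((n - k : ℕ) : ℂ) + 1 := by
    rw [Nat.cast_sub hk']; ring
  rw [h1, h2]
  have h3 := dd_succ θ p (n - k)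
  have h4 : φ k * ((((n - k : ℕ) : ℂ) + 1) * (cc k * dd θ p ((n - k) + 1)))
      = φ k * cc k * ((((n - k : ℕ) : ℂ) + 1) * dd θ p ((n - k) + 1)) := by ring
  rw [h4, h3, Nat.cast_sub hk']
  ring

lemma rel1 (θ p : ℂ) (n : ℕ) :
    ((n : ℂ) + 1) * VV θ p (n + 1) - WW θ p (n + 1)
      = θ * ((n : ℂ) - p) * VV θ p n - θ * WW θ p n := by
  have e1 : ((n : ℂ) + 1) * VV θ p (n + 1) - WW θ p (n + 1)
      = ∑ k ∈ range (n + 2), (1 : ℂ) * (((n : ℂ) + 1 - k) * (cc k * dd θ p (n + 1 - k))) := by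
    rw [VV, WW, Finset.mul_sum, ← Finset.sum_sub_distrib]
    exact Finset.sum_congr rfl fun k _ => by ring
  have e2 : θ * ((n : ℂ) - p) * VV θ p n - θ * WW θ p n
      = ∑ k ∈ range (n + 1), (1 : ℂ) * (θ * (((n : ℂ) - k) - p) * (cc k * dd θ p (n - k))) := by
    rw [VV, WW, Finset.mul_sum, Finset.mul_sum, ← Finset.sum_sub_distrib]
    exact Finset.sum_congr rfl fun k _ => by ring
  rw [e1, e2]; exact keyd θ p (fun _ => 1) n

lemma rel3 (θ p : ℂ) (n : ℕ) :
    ((n : ℂ) + 1) * WW θ p (n + 1) - ZZ θ p (n + 1)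
      = θ * ((n : ℂ) - p) * WW θ p n - θ * ZZ θ p n := by
  have e1 : ((n : ℂ) + 1) * WW θ p (n + 1) - ZZ θ p (n + 1)
      = ∑ k ∈ range (n + 2), (k : ℂ) * (((n : ℂ) + 1 - k) * (cc k * dd θ p (n + 1 - k))) := by
    rw [WW, ZZ, Finset.mul_sum, ← Finset.sum_sub_distrib]
    exact Finset.sum_congr rfl fun k _ => by ring
  have e2 : θ * ((n : ℂ) - p) * WW θ p n - θ * ZZ θ p n
      = ∑ k ∈ range (n + 1), (k : ℂ) * (θ * (((n : ℂ) - k) - p) * (cc k * dd θ p (n - k))) := by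
    rw [WW, ZZ, Finset.mul_sum, Finset.mul_sum, ← Finset.sum_sub_distrib]
    exact Finset.sum_congr rfl fun k _ => by ring
  rw [e1, e2]; exact keyd θ p (fun k => (k : ℂ)) n

lemma rel2 (θ p : ℂ) (n : ℕ) :
    ZZ θ p (n + 1) = ZZ θ p n + WW θ p n + VV θ p n / 4 := by
  have e1 : ZZ θ p (n + 1)
      = ∑ k ∈ range (n + 1), (((k : ℂ) + 1/2) ^ 2) * (cc k * dd θ p (n - k)) := by
    rw [ZZ, Finset.sum_range_succ']
    simp only [Nat.cast_zero, ne_eq, OfNat.ofNat_ne_zero, not_false_eq_true, zero_pow,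
      zero_mul, add_zero]
    refine Finset.sum_congr rfl fun k hk => ?_
    have h1 : n + 1 - (k + 1) = n - k := by omega
    rw [h1]
    have h2 : ((k + 1 : ℕ) : ℂ) ^ 2 * (cc (k + 1) * dd θ p (n - k))
        = (((k : ℂ) + 1) ^ 2 * cc (k + 1)) * dd θ p (n - k) := by push_cast; ring
    rw [h2, cc_succ]; ring
  rw [e1, ZZ, WW, VV, Finset.sum_div, ← Finset.sum_add_distrib, ← Finset.sum_add_distrib]
  exact Finset.sum_congr rfl fun k _ => by ring

lemma recurrence (θ p : ℂ) (m : ℕ) :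
    VV θ p (m + 3) * ((m : ℂ) + 3) ^ 2
      = ((((m : ℂ) + 2) + 1 / 2) ^ 2 + θ * (2 * ((m : ℂ) + 2) ^ 2 - 2 * ((m : ℂ) + 2) * p - p)) * VV θ p (m + 2)
        - θ * (2 * ((m : ℂ) + 2) ^ 2 - 2 * (p + 1) * ((m : ℂ) + 2) + 1 / 2 + θ * (((m : ℂ) + 2) - p - 1) ^ 2) * VV θ p (m + 1)
        + θ ^ 2 * (((m : ℂ) + 2) - p - 3 / 2) ^ 2 * VV θ p m := by
  have h1a := rel1 θ p (m + 2)
  have h1b := rel1 θ p (m + 1)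
  have h1c := rel1 θ p m
  have h2a := rel2 θ p (m + 2)
  have h2b := rel2 θ p (m + 1)
  have h2c := rel2 θ p m
  have h3a := rel3 θ p (m + 2)
  have h3b := rel3 θ p (m + 1)
  have h3c := rel3 θ p m
  push_cast at h1a h1b h1c h2a h2b h2c h3a h3b h3c ⊢
  linear_combination ((m : ℂ) + 3) * h1a + (θ * (p - (m : ℂ) - 1) - ((m : ℂ) + 3)) * h1b
    + θ * ((m : ℂ) + 1 - p) * h1c + h2a - 2 * θ * h2b + θ ^ 2 * h2c
    + h3a - (1 + θ) * h3b + θ * h3c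


theorem stmt_10 (θ p : ℂ) (r : ℝ) (hr0 : 0 < r) (hr1 : r < 1)
    (hθr : ‖θ‖ * r ^ 2 < 1)
    (hpos : ∀ t : ℝ, t ≤ 0 → (1 - θ * (r : ℂ) ^ 2) ≠ (t : ℂ))
    (v : ℕ → ℂ)
    (hv : ∀ n : ℕ, v n = ∑ k ∈ range (n + 1),
      poch (1 / 2) k ^ 2 / (Nat.factorial k : ℂ) ^ 2 *
        (θ ^ (n - k) * poch (-p) (n - k) / (Nat.factorial (n - k) : ℂ))) :
    HasSum (fun n : ℕ => (Real.pi / 2 : ℂ) * v n * (r : ℂ) ^ (2 * n))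
      ((1 - θ * (r : ℂ) ^ 2) ^ p *
        ((∫ t in (0 : ℝ)..(Real.pi / 2), 1 / Real.sqrt (1 - r ^ 2 * Real.sin t ^ 2)) : ℂ)) ∧
    v 0 = 1 ∧
    v 1 = 1 / 4 - p * θ ∧
    v 2 = (1 / 2) * θ ^ 2 * p * (p - 1) - (1 / 4) * θ * p + 9 / 64 ∧
    ∀ n : ℕ, 2 ≤ n →
      v (n + 1) =
        (((n : ℂ) + 1 / 2) ^ 2 + θ * (2 * n ^ 2 - 2 * n * p - p)) * v n / ((n : ℂ) + 1) ^ 2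
        - θ * (2 * (n : ℂ) ^ 2 - 2 * (p + 1) * n + 1 / 2 + θ * (n - p - 1) ^ 2) * v (n - 1) /
            ((n : ℂ) + 1) ^ 2
        + θ ^ 2 * ((n : ℂ) - p - 3 / 2) ^ 2 * v (n - 2) / ((n : ℂ) + 1) ^ 2 := by
  have hV : ∀ n : ℕ, v n = VV θ p n := by
    intro n
    rw [hv n, VV]
    exact Finset.sum_congr rfl fun k _ => by rw [cc, dd]
  refine ⟨?_, ?_, ?_, ?_, ?_⟩
  · -- HasSum
    set z : ℂ := θ * (r : ℂ) ^ 2 with hzdef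
    have hznorm : ‖z‖ < 1 := by
      rw [hzdef, norm_mul]
      have : ‖((r : ℂ)) ^ 2‖ = r ^ 2 := by
        rw [norm_pow, Complex.norm_real, Real.norm_of_nonneg (le_of_lt hr0)]
      rwa [this]
    set f : ℕ → ℂ := fun n => (Real.pi / 2 : ℂ) * cc n * (r : ℂ) ^ (2 * n) with hfdef
    set g : ℕ → ℂ := fun m => bc (-p) m * z ^ m with hgdef
    have hfreal : ∀ n : ℕ,
        ((Real.pi / 2 * (pr n / (Nat.factorial n : ℝ)) ^ 2 * r ^ (2 * n) : ℝ) : ℂ) = f n := by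
      intro n
      rw [hfdef]
      simp only
      rw [cc, ← pr_cast]
      push_cast
      ring
    have hK := hasSum_K r hr0 hr1
    have hf : HasSum f ((((∫ t in (0 : ℝ)..(Real.pi / 2),
        1 / Real.sqrt (1 - r ^ 2 * Real.sin t ^ 2)) : ℝ)) : ℂ) := by
      have := Complex.hasSum_ofReal.mpr hK
      rwa [funext hfreal] at this
    have hg : HasSum g ((1 - z) ^ p) := by
      have := hasSum_binomial (-p) hznorm
      rwa [neg_neg] at this
    have hfn : Summable fun n => ‖f n‖ := by
      have hs := hK.summable
      have : (fun n => ‖f n‖)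
          = fun n => Real.pi / 2 * (pr n / (Nat.factorial n : ℝ)) ^ 2 * r ^ (2 * n) := by
        funext n
        rw [← hfreal n, Complex.norm_real, Real.norm_of_nonneg]
        have h2 : 0 < pr n := pr_pos n
        have h3 : (0:ℝ) < (Nat.factorial n : ℝ) := by exact_mod_cast Nat.factorial_pos n
        positivity
      rw [this]
      exact hs
    have hgn : Summable fun m => ‖g m‖ := by
      refine Summable.of_nonneg_of_le (fun m => norm_nonneg _)
        (fun m => ?_) (summable_aux (-p) (norm_nonneg z) hznorm)
      rw [hgdef]
      simp only
      rw [norm_mul, norm_pow]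
      nlinarith [mul_nonneg (Nat.cast_nonneg (α := ℝ) m)
        (mul_nonneg (norm_nonneg (bc (-p) m)) (pow_nonneg (norm_nonneg z) m))]
    have hC := hasSum_sum_range_mul_of_summable_norm hfn hgn
    rw [hf.tsum_eq, hg.tsum_eq] at hC
    have hfg : (fun n => ∑ k ∈ range (n + 1), f k * g (n - k))
        = fun n => (Real.pi / 2 : ℂ) * v n * (r : ℂ) ^ (2 * n) := by
      funext n
      rw [hV n, VV, Finset.mul_sum, Finset.sum_mul]
      refine Finset.sum_congr rfl fun k hk => ?_
      have hkn : k ≤ n := Nat.lt_succ_iff.mp (Finset.mem_range.mp hk)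
      rw [hfdef, hgdef, dd]
      simp only
      rw [hzdef, mul_pow, ← pow_mul]
      have hek : 2 * k + 2 * (n - k) = 2 * n := by omega
      rw [bc]
      field_simp
      rw [← hek, pow_add]
      ring
    rw [hfg] at hC
    rw [mul_comm] at hC
    convert hC using 2
    · rfl
    rw [← intervalIntegral.integral_ofReal]
    apply intervalIntegral.integral_congr
    intro t _
    push_cast
    ring
  · rw [hv 0]
    simp [poch_zero]
  · rw [hv 1]
    rw [Finset.sum_range_succ, Finset.sum_range_one]
    simp [poch_zero, poch_succ, Nat.factorial]
    ring
  · rw [hv 2]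
    rw [Finset.sum_range_succ, Finset.sum_range_succ, Finset.sum_range_one]
    simp only [Nat.sub_self, Nat.factorial]
    rw [show (2:ℕ) - 0 = 2 from rfl, show (2:ℕ) - 1 = 1 from rfl]
    simp [poch_zero, poch_succ]
    push_cast
    ring
  · intro n hn
    obtain ⟨m, rfl⟩ : ∃ m, n = m + 2 := ⟨n - 2, by omega⟩
    have h1 : m + 2 - 1 = m + 1 := rfl
    have h2 : m + 2 - 2 = m := rfl
    rw [h1, h2, hV, hV, hV, hV]
    have hQ : (((m + 2 : ℕ) : ℂ) + 1) ^ 2 ≠ 0 := by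
      have : ((m + 2 : ℕ) : ℂ) + 1 = ((m + 3 : ℕ) : ℂ) := by push_cast; ring
      rw [this]
      exact pow_ne_zero 2 (Nat.cast_ne_zero.mpr (by omega))
    rw [div_sub_div_same, ← add_div, eq_div_iff hQ]
    have hrec := recurrence θ p m
    push_cast at hrec ⊢
    linear_combination hrec
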